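/- Let n = 2 and let μ ∈ (0, 1) and ω > 0 be real. Then the stability quartic Q₁ has a real root λ > 0; in particular Q₁ has a root with nonzero real part, so the regular 2-gon relative equilibrium with central mass is linearly unstable. -/
import Mathlib


open Real Finset

/-- `F_j = ω²·(12 − μ(n−1)(n−5) + μ(n² − 6nj + 6j² − 1)) / (6(2 + μ(n−1)))`. -/
noncomputable def Fcoef (n j : ℕ) (μ ω : ℝ) : ℝ :=
  ω ^ 2 * (12 - μ * ((n : ℝ) - 1) * ((n : ℝ) - 5)
      + μ * ((n : ℝ) ^ 2 - 6 * n * j + 6 * (j : ℝ) ^ 2 - 1))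
    / (6 * (2 + μ * ((n : ℝ) - 1)))

/-- `ε_j = 2μnω²/(2 + μ(n−1))` if `j = 1`, else `0`. -/
noncomputable def eps (n j : ℕ) (μ ω : ℝ) : ℝ :=
  if j = 1 then 2 * μ * n * ω ^ 2 / (2 + μ * ((n : ℝ) - 1)) else 0

/-- `ε'_j = 2μnω²/(2 + μ(n−1))` if `j = n−1`, else `0`. -/
noncomputable def eps' (n j : ℕ) (μ ω : ℝ) : ℝ :=
  if j = n - 1 then 2 * μ * n * ω ^ 2 / (2 + μ * ((n : ℝ) - 1)) else 0

/-- The stability quartic `Q_j(λ) = λ⁴ + 2ω²λ² + ω⁴ − (F_j + ε_j)(F_j + ε'_j)`. -/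
noncomputable def Q (n j : ℕ) (μ ω : ℝ) (lam : ℂ) : ℂ :=
  lam ^ 4 + 2 * (ω : ℂ) ^ 2 * lam ^ 2 + (ω : ℂ) ^ 4
    - ((Fcoef n j μ ω + eps n j μ ω : ℝ) : ℂ)
      * ((Fcoef n j μ ω + eps' n j μ ω : ℝ) : ℂ)

/-- For `n = 2` the quartic `Q₁` has a positive real root, hence a root with
nonzero real part: the regular 2-gon with central mass is linearly unstable. -/
theorem two_gon_unstable (μ ω : ℝ) (hμ : μ ∈ Set.Ioo (0 : ℝ) 1) (hω : 0 < ω) :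
    (∃ lam : ℝ, 0 < lam ∧ Q 2 1 μ ω (lam : ℂ) = 0) ∧
    (∃ lam : ℂ, Q 2 1 μ ω lam = 0 ∧ lam.re ≠ 0) := by
  obtain ⟨hμ0, hμ1⟩ := hμ
  have h2 : (0:ℝ) < 2 + μ := by linarith
  set c : ℝ := 3 * μ / (2 + μ) with hc
  have hc0 : 0 ≤ c := by positivity
  set x : ℝ := ω * Real.sqrt c with hx
  have hxpos : 0 < x := by
    apply mul_pos hω
    apply Real.sqrt_pos.mpr
    positivity
  have hx2 : x ^ 2 = ω ^ 2 * c := by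
    rw [hx, mul_pow, Real.sq_sqrt hc0]
  have hreal : x ^ 4 + 2 * ω ^ 2 * x ^ 2 + ω ^ 4
      - (Fcoef 2 1 μ ω + eps 2 1 μ ω) * (Fcoef 2 1 μ ω + eps' 2 1 μ ω) = 0 := by
    have hx4 : x ^ 4 = (ω ^ 2 * c) ^ 2 := by
      rw [show x ^ 4 = (x ^ 2) ^ 2 by ring, hx2]
    simp only [Fcoef, eps, eps']
    norm_num
    rw [hx4, hx2, hc]
    have h2' : (2 + μ) ≠ 0 := ne_of_gt h2
    field_simp
    ring
  have hQ : Q 2 1 μ ω (x : ℂ) = 0 := by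
    have : Q 2 1 μ ω (x : ℂ)
        = ((x ^ 4 + 2 * ω ^ 2 * x ^ 2 + ω ^ 4
          - (Fcoef 2 1 μ ω + eps 2 1 μ ω) * (Fcoef 2 1 μ ω + eps' 2 1 μ ω) : ℝ) : ℂ) := by
      simp only [Q]
      push_cast
      ring
    rw [this, hreal]
    norm_num
  refine ⟨⟨x, hxpos, hQ⟩, ⟨(x : ℂ), hQ, ?_⟩⟩
  simpa using ne_of_gt hxpos
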